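/- Let i : ℕ → ℕ (indexed from 1) be an infinite sequence of vertices, and let C_AF(μ_i) ⊆ AF be the set of quivers Q for which the sequence n ↦ μ_{i_n} ∘ ⋯ ∘ μ_{i_1}(Q) converges in the space AF, with D_AF(μ_i) its complement. Then: (i) D_AF(μ_i) is dense in AF; (ii) if no vertex v ∈ ℕ appears infinitely many times in the sequence i, then C_AF(μ_i) is dense in AF; (iii) if only finitely many vertices v ∈ ℕ appear in the sequence i, then C_AF(μ_i) is not dense in AF. -/

import Mathlib

-- Mutation of a quiver at a vertex `x`.
open Classical in
noncomputable def mutateFun {X : Type*} (x : X) (Q : X → X → ℤ) : X → X → ℤ :=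
  fun v w =>
    if v = x ∨ w = x then - Q v w
    else Q v w + Q v x * max (Q x w) 0 + max (- Q v x) 0 * Q x w

-- Restriction of a quiver to a set of vertices `V`.
open Classical in
noncomputable def restrictFun {X : Type*} (V : Set X) (Q : X → X → ℤ) : X → X → ℤ :=
  fun a b => if a ∈ V ∧ b ∈ V then Q a b else 0

-- Overfill of a quiver on a set of vertices `V`.
open Classical in
noncomputable def overfillFun {X : Type*} (V : Set X) (Q : X → X → ℤ) : X → X → ℤ :=
  fun a b => if a ∈ V ∨ b ∈ V then Q a b else 0

/-- The set of arrow finite quivers on `X`: skew-symmetric integer matrices. -/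
def AF (X : Type*) : Type _ := {Q : X → X → ℤ // ∀ a b, Q a b = - Q b a}

/-- The basic set `U_{Q,V}`. -/
def Uset {X : Type*} (Q : AF X) (V : Set X) : Set (AF X) :=
  {Q' | restrictFun V Q'.1 = restrictFun V Q.1}

/-- The basic set `W_{Q,V}`. -/
def Wset {X : Type*} (Q : AF X) (V : Set X) : Set (AF X) :=
  {Q' | overfillFun V Q'.1 = overfillFun V Q.1}

def UBasis (X : Type*) : Set (Set (AF X)) :=
  {U | ∃ (Q : AF X) (V : Set X), V.Finite ∧ U = Uset Q V}

def WBasis (X : Type*) : Set (Set (AF X)) :=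
  {U | ∃ (Q : AF X) (V : Set X), V.Finite ∧ U = Wset Q V}

/-- The weak topology on `AF X`, generated by the sets `U_{Q,V}` with `V` finite. -/
def weakTop (X : Type*) : TopologicalSpace (AF X) :=
  TopologicalSpace.generateFrom (UBasis X)

/-- The strong topology on `AF X`, generated by the sets `W_{Q,V}` with `V` finite. -/
def strongTop (X : Type*) : TopologicalSpace (AF X) :=
  TopologicalSpace.generateFrom (WBasis X)

/-- Locally finite quivers. -/
def LFset (X : Type*) : Set (AF X) := {Q | ∀ x : X, {y : X | Q.1 x y ≠ 0}.Finite}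

/-- Finite quivers: those with finite support. -/
def FinSet (X : Type*) : Set (AF X) := {Q | {x : X | ∃ y, Q.1 x y ≠ 0}.Finite}

/-- Mutation as a map `AF X → AF X`. -/
noncomputable def AF.mut {X : Type*} (x : X) (Q : AF X) : AF X :=
  ⟨mutateFun x Q.1, by
    intro a b
    have h := Q.2
    simp only [mutateFun]
    by_cases ha : a = x
    · rw [if_pos (Or.inl ha), if_pos (Or.inr ha), h a b]
    · by_cases hb : b = x
      · rw [if_pos (Or.inr hb), if_pos (Or.inl hb), h a b]
      · rw [if_neg (fun hc => hc.elim ha hb), if_neg (fun hc => hc.elim hb ha),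
          h b a, h b x, h x a]
        simp only [neg_neg]
        ring⟩

/-- `mutUpTo i Q n = μ_{i n} ∘ ⋯ ∘ μ_{i 1} (Q)` (the sequence `i` is indexed from 1). -/
noncomputable def mutUpTo {X : Type*} (i : ℕ → X) (Q : AF X) : ℕ → AF X
  | 0 => Q
  | n + 1 => AF.mut (i (n + 1)) (mutUpTo i Q n)

/-- The domain of convergence in `AF` of the infinite mutation sequence `μ_i`. -/
def CAF (i : ℕ → ℕ) : Set (AF ℕ) :=
  {Q | ∃ L : AF ℕ,
    Filter.Tendsto (fun n => mutUpTo i Q n) Filter.atTop (@nhds _ (weakTop ℕ) L)}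

/-! Mutation at `x` changes the entry at `(p, q)` only through the entries at `(p, x)` and
`(x, q)`. Hence restricting to a set `V` commutes with mutations at vertices of `V` and at
vertices not linked to `V`; and since mutations are involutions, the state at any time can be
prescribed while the restriction to `V` stays that of a given quiver.

(ii) The restriction of `P` to `V` is frozen once the sequence has left `V` for good.
(iii) Take for `V` the mutated vertices and a fresh vertex `w`, and `P` a single arrow `v → w`
with `v` mutated infinitely often: near `P` the entry at `(v, w)` is `± 1` and changes sign
infinitely often. (i) If a vertex `s` is mutated infinitely often, attach a fresh vertex `w` to
`s` late enough that from then on `w` stays linked to a vertex mutated infinitely often, whose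
row must vanish in a limit. Otherwise, once two fresh vertices `a`, `b` are no longer mutated,
attach a path `a → t → b` through every other vertex `t` outside `V`: each later mutation
changes the entry at `(a, b)`. -/

open Filter Topology TopologicalSpace

attribute [local instance] weakTop

namespace AF

variable {X : Type*}

@[ext] lemma ext {Q R : AF X} (h : ∀ p q, Q.1 p q = R.1 p q) : Q = R :=
  Subtype.ext (funext₂ h)

lemma apply_swap (Q : AF X) (p q : X) : Q.1 p q = -Q.1 q p := Q.2 p q

lemma mut_apply_left (Q : AF X) (x q : X) : (Q.mut x).1 x q = -Q.1 x q := by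
  simp [AF.mut, mutateFun]

lemma mut_apply_right (Q : AF X) (x p : X) : (Q.mut x).1 p x = -Q.1 p x := by
  simp [AF.mut, mutateFun]

lemma mut_apply_of_ne (Q : AF X) {x p q : X} (hp : p ≠ x) (hq : q ≠ x) :
    (Q.mut x).1 p q = Q.1 p q + Q.1 p x * max (Q.1 x q) 0 + max (-Q.1 p x) 0 * Q.1 x q := by
  simp [AF.mut, mutateFun, hp, hq]

lemma mut_apply_of_ne_of_eq_zero (Q : AF X) {x p q : X} (hp : p ≠ x) (hq : q ≠ x)
    (h : Q.1 p x = 0 ∨ Q.1 x q = 0) : (Q.mut x).1 p q = Q.1 p q := by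
  rcases h with h | h <;> simp [mut_apply_of_ne Q hp hq, h]

lemma mut_involutive (x : X) : Function.Involutive (AF.mut x) := by
  intro Q
  ext p q
  by_cases hp : p = x
  · subst hp; simp [mut_apply_left]
  by_cases hq : q = x
  · subst hq; simp [mut_apply_right]
  rw [mut_apply_of_ne _ hp hq, mut_apply_of_ne _ hp hq, mut_apply_left, mut_apply_right]
  have h₁ := max_zero_sub_max_neg_zero_eq_self (Q.1 x q)
  have h₂ := max_zero_sub_max_neg_zero_eq_self (Q.1 p x)
  simp only [neg_neg]
  linear_combination Q.1 p x * h₁ - Q.1 x q * h₂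

lemma mut_eq_self_of_row_eq_zero {Q : AF X} {x : X} (h : ∀ q, Q.1 x q = 0) : Q.mut x = Q := by
  ext p q
  by_cases hp : p = x
  · subst hp; simp [mut_apply_left, h]
  by_cases hq : q = x
  · subst hq; simp [mut_apply_right, Q.apply_swap p, h]
  exact mut_apply_of_ne_of_eq_zero Q hp hq (Or.inl (by rw [Q.apply_swap, h, neg_zero]))

lemma mutUpTo_succ (i : ℕ → X) (Q : AF X) (n : ℕ) :
    mutUpTo i Q (n + 1) = (mutUpTo i Q n).mut (i (n + 1)) := rfl

lemma mutUpTo_succ' (i : ℕ → X) (Q : AF X) (n : ℕ) :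
    mutUpTo i Q (n + 1) = mutUpTo (fun k => i (k + 1)) (Q.mut (i 1)) n := by
  induction n with
  | zero => rfl
  | succ n ih => rw [mutUpTo_succ, ih, mutUpTo_succ]

lemma mutUpTo_induction {p : AF X → Prop} (hp : ∀ x Q, p Q → p (Q.mut x)) {Q : AF X}
    (hQ : p Q) (i : ℕ → X) (n : ℕ) : p (mutUpTo i Q n) := by
  induction n with
  | zero => exact hQ
  | succ n ih => exact hp _ _ ih

lemma mutUpTo_injective (i : ℕ → X) (n : ℕ) : Function.Injective (mutUpTo i · n) := by
  induction n with
  | zero => exact fun _ _ h => h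
  | succ n ih => exact (mut_involutive (i (n + 1))).injective.comp ih

lemma exists_mutUpTo_eq {p : AF X → Prop} (hp : ∀ x Q, p Q → p (Q.mut x)) (i : ℕ → X)
    (n : ℕ) {R : AF X} (hR : p R) : ∃ Q, p Q ∧ mutUpTo i Q n = R := by
  induction n generalizing i with
  | zero => exact ⟨R, hR, rfl⟩
  | succ n ih =>
    obtain ⟨Q, hQ, hQR⟩ := ih (fun k => i (k + 1))
    refine ⟨Q.mut (i 1), hp _ _ hQ, ?_⟩
    rw [mutUpTo_succ', mut_involutive, hQR]

def SupportedOn (V : Set X) (Q : AF X) : Prop := ∀ p ∉ V, ∀ q, Q.1 p q = 0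

lemma SupportedOn.apply_eq_zero_right {V : Set X} {Q : AF X} (hQ : SupportedOn V Q)
    (p : X) {q : X} (hq : q ∉ V) : Q.1 p q = 0 := by
  rw [Q.apply_swap, hQ q hq, neg_zero]

lemma SupportedOn.mut {V : Set X} {Q : AF X} (hQ : SupportedOn V Q) (x : X) :
    SupportedOn V (Q.mut x) := by
  intro p hp q
  have hpx := hQ p hp x
  by_cases h₁ : p = x
  · subst h₁; rw [mut_apply_left, hQ p hp, neg_zero]
  by_cases h₂ : q = x
  · subst h₂; rw [mut_apply_right, hpx, neg_zero]
  rw [mut_apply_of_ne_of_eq_zero Q h₁ h₂ (.inl hpx), hQ p hp]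

lemma SupportedOn.mutUpTo {V : Set X} {Q : AF X} (hQ : SupportedOn V Q) (i : ℕ → X) (n : ℕ) :
    SupportedOn V (mutUpTo i Q n) :=
  mutUpTo_induction (fun x _ h => h.mut x) hQ i n

lemma SupportedOn.mut_eq_self {V : Set X} {Q : AF X} (hQ : SupportedOn V Q) {x : X}
    (hx : x ∉ V) : Q.mut x = Q :=
  mut_eq_self_of_row_eq_zero (hQ x hx)

def Splits (V : Set X) (Q : AF X) : Prop := ∀ p ∈ V, ∀ q ∉ V, Q.1 p q = 0

lemma Splits.mut {V : Set X} {Q : AF X} (hQ : Splits V Q) (x : X) : Splits V (Q.mut x) := by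
  intro p hp q hq
  by_cases h₁ : p = x
  · subst h₁; rw [mut_apply_left, hQ p hp q hq, neg_zero]
  by_cases h₂ : q = x
  · subst h₂; rw [mut_apply_right, hQ p hp q hq, neg_zero]
  refine (mut_apply_of_ne_of_eq_zero Q h₁ h₂ ?_).trans (hQ p hp q hq)
  by_cases hx : x ∈ V
  exacts [.inr (hQ x hx q hq), .inl (hQ p hp x hx)]

noncomputable def restrict (V : Set X) (Q : AF X) : AF X :=
  ⟨restrictFun V Q.1, fun p q => by
    simp only [restrictFun]
    by_cases hp : p ∈ V <;> by_cases hq : q ∈ V <;> simp [hp, hq, Q.apply_swap p q]⟩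

open Classical in
lemma restrict_apply (V : Set X) (Q : AF X) (p q : X) :
    (Q.restrict V).1 p q = if p ∈ V ∧ q ∈ V then Q.1 p q else 0 := rfl

lemma supportedOn_restrict (V : Set X) (Q : AF X) : SupportedOn V (Q.restrict V) :=
  fun p hp q => by simp [restrict_apply, hp]

lemma mem_Uset_iff {P Q : AF X} {V : Set X} :
    Q ∈ Uset P V ↔ Q.restrict V = P.restrict V :=
  (Subtype.ext_iff (a1 := Q.restrict V) (a2 := P.restrict V)).symm

lemma mem_Uset_iff_apply {P Q : AF X} {V : Set X} :
    Q ∈ Uset P V ↔ ∀ p ∈ V, ∀ q ∈ V, Q.1 p q = P.1 p q := by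
  refine mem_Uset_iff.trans ⟨fun h p hp q hq => ?_, fun h => ?_⟩
  · simpa [restrict_apply, hp, hq] using congrArg (fun R : AF X => R.1 p q) h
  · ext p q
    simp only [restrict_apply]
    split_ifs with hpq
    exacts [h p hpq.1 q hpq.2, rfl]

lemma restrict_mem_Uset (P : AF X) (V : Set X) : P.restrict V ∈ Uset P V :=
  mem_Uset_iff_apply.2 fun p hp q hq => by simp [restrict_apply, hp, hq]

lemma Uset_subset_Uset {P Q : AF X} {V W : Set X} (hQ : Q ∈ Uset P V) (hVW : V ⊆ W) :
    Uset Q W ⊆ Uset P V := fun _ hR =>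
  mem_Uset_iff_apply.2 fun p hp q hq =>
    (mem_Uset_iff_apply.1 hR p (hVW hp) q (hVW hq)).trans (mem_Uset_iff_apply.1 hQ p hp q hq)

lemma restrict_mut {Q : AF X} {V : Set X} {x : X} (h : x ∈ V ∨ ∀ p ∈ V, Q.1 p x = 0) :
    (Q.mut x).restrict V = (Q.restrict V).mut x := by
  ext p q
  simp only [restrict_apply]
  simp only [AF.mut, mutateFun, restrict_apply]
  by_cases hx : x ∈ V
  · split_ifs <;> simp_all
  · have h := h.resolve_left hx
    split_ifs <;> simp_all [Q.apply_swap x]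

lemma restrict_mutUpTo {i : ℕ → X} {Q : AF X} {V : Set X} {n : ℕ}
    (h : ∀ k < n, i (k + 1) ∈ V ∨ ∀ p ∈ V, (mutUpTo i Q k).1 p (i (k + 1)) = 0) :
    (mutUpTo i Q n).restrict V = mutUpTo i (Q.restrict V) n := by
  induction n with
  | zero => rfl
  | succ n ih =>
    rw [mutUpTo_succ, mutUpTo_succ, restrict_mut (h n n.lt_succ_self),
      ih fun k hk => h k (hk.trans n.lt_succ_self)]

lemma mutUpTo_mem_Uset {i : ℕ → X} {P Q : AF X} {V : Set X} (hi : ∀ k, i (k + 1) ∈ V)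
    (hQ : Q ∈ Uset P V) (n : ℕ) : mutUpTo i Q n ∈ Uset (mutUpTo i P n) V := by
  rw [mem_Uset_iff, restrict_mutUpTo fun k _ => .inl (hi k),
    restrict_mutUpTo fun k _ => .inl (hi k), mem_Uset_iff.1 hQ]

instance : Add (AF X) :=
  ⟨fun Q R => ⟨Q.1 + R.1, fun p q => by simp [Q.apply_swap p q, R.apply_swap p q]; ring⟩⟩

lemma add_apply (Q R : AF X) (p q : X) : (Q + R).1 p q = Q.1 p q + R.1 p q := rfl

lemma restrict_add_of_supportedOn {A E : AF X} {V : Set X} (hA : SupportedOn V A)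
    (hE : ∀ p ∈ V, ∀ q ∈ V, E.1 p q = 0) : (A + E).restrict V = A := by
  ext p q
  rw [restrict_apply, add_apply]
  split_ifs with hpq
  · rw [hE p hpq.1 q hpq.2, add_zero]
  · rcases not_and_or.1 hpq with hp | hq
    exacts [(hA p hp q).symm, (hA.apply_eq_zero_right p hq).symm]

/-- Mutations are involutions, so `R` is the time-`n` state of some quiver `Q`; along its
trajectory restriction to `V` commutes with the mutations, which pins down `Q.restrict V`. -/
lemma exists_mem_Uset_mutUpTo_eq {p : AF X → Prop} (hp : ∀ x Q, p Q → p (Q.mut x))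
    {i : ℕ → X} {n : ℕ} {V : Set X}
    (hsep : ∀ Q, p Q → ∀ k < n, i (k + 1) ∉ V → ∀ q ∈ V, Q.1 q (i (k + 1)) = 0)
    {P R : AF X} (hR : p R) (hRV : R.restrict V = mutUpTo i (P.restrict V) n) :
    ∃ Q ∈ Uset P V, p Q ∧ mutUpTo i Q n = R := by
  obtain ⟨Q, hQ, hQR⟩ := exists_mutUpTo_eq hp i n hR
  refine ⟨Q, mem_Uset_iff.2 (mutUpTo_injective i n ?_), hQ, hQR⟩
  show mutUpTo i (Q.restrict V) n = _
  rw [← hQR] at hRV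
  rwa [← restrict_mutUpTo fun k hk =>
    or_iff_not_imp_left.2 (hsep _ (mutUpTo_induction hp hQ i k) k hk)]

open Classical in
noncomputable def ofRel (r : X → X → Prop) : AF X :=
  ⟨fun p q => (if r p q then 1 else 0) - (if r q p then 1 else 0), fun _ _ => by ring⟩

open Classical in
lemma ofRel_apply (r : X → X → Prop) (p q : X) :
    (ofRel r).1 p q = (if r p q then 1 else 0) - (if r q p then 1 else 0) := rfl

noncomputable def arrow (v w : X) : AF X := ofRel fun p q => p = v ∧ q = w

lemma arrow_swap_apply (v w p q : X) : (arrow w v).1 p q = -(arrow v w).1 p q := by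
  simp only [arrow, ofRel_apply]
  rw [and_comm (a := p = w), and_comm (a := q = w)]
  ring

lemma mut_arrow_of_ne {v w x : X} (hv : x ≠ v) (hw : x ≠ w) : (arrow v w).mut x = arrow v w :=
  mut_eq_self_of_row_eq_zero fun q => by simp [arrow, ofRel_apply, hv, hw]

lemma mut_arrow_of_eq {v w x : X} (hx : x = v ∨ x = w) : (arrow v w).mut x = arrow w v := by
  ext p q
  rw [arrow_swap_apply]
  by_cases hp : p = x
  · subst hp; exact mut_apply_left _ _ _
  by_cases hq : q = x
  · subst hq; exact mut_apply_right _ _ _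
  rw [mut_apply_of_ne _ hp hq]
  simp only [arrow, ofRel_apply]
  rcases hx with rfl | rfl
  · by_cases hpw : p = w <;> by_cases hqw : q = w <;> simp_all
  · by_cases hpv : p = v <;> by_cases hqv : q = v <;> simp_all

lemma SupportedOn.add_arrow {A : AF X} {V : Set X} {s w : X} (hA : SupportedOn V A)
    (hs : s ∈ V) : SupportedOn (insert w V) (A + arrow s w) := fun p hp q => by
  simp only [Set.mem_insert_iff, not_or] at hp
  have hps : p ≠ s := fun h => hp.2 (h ▸ hs)
  simp [add_apply, hA p hp.2, arrow, ofRel_apply, hp.1, hps]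

lemma restrict_add_arrow {A : AF X} {V : Set X} {s w : X} (hA : SupportedOn V A)
    (hw : w ∉ V) : (A + arrow s w).restrict V = A :=
  restrict_add_of_supportedOn hA fun p hp q hq => by
    have hpw : p ≠ w := fun h => hw (h ▸ hp)
    have hqw : q ≠ w := fun h => hw (h ▸ hq)
    simp [arrow, ofRel_apply, hpw, hqw]

lemma mutUpTo_arrow_apply_ne_zero (i : ℕ → X) {v w : X} (hvw : v ≠ w) (n : ℕ) :
    (mutUpTo i (arrow v w) n).1 v w ≠ 0 := by
  have key : mutUpTo i (arrow v w) n = arrow v w ∨ mutUpTo i (arrow v w) n = arrow w v := by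
    induction n with
    | zero => exact .inl rfl
    | succ n ih =>
      rw [mutUpTo_succ]
      by_cases hx : i (n + 1) = v ∨ i (n + 1) = w
      · rcases ih with h | h <;> rw [h, mut_arrow_of_eq (by tauto)] <;> tauto
      · push Not at hx
        rcases ih with h | h <;> rw [h]
        exacts [.inl (mut_arrow_of_ne hx.1 hx.2), .inr (mut_arrow_of_ne hx.2 hx.1)]
  rcases key with h | h <;> rw [h] <;> simp [arrow, ofRel_apply, hvw, hvw.symm]

lemma isTopologicalBasis_UBasis : IsTopologicalBasis (UBasis X) := by
  refine ⟨?_, Set.sUnion_eq_univ_iff.2 fun Q => ⟨_, ⟨Q, ∅, Set.finite_empty, rfl⟩, rfl⟩,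
    rfl⟩
  rintro _ ⟨P₁, V₁, hV₁, rfl⟩ _ ⟨P₂, V₂, hV₂, rfl⟩ Q ⟨h₁, h₂⟩
  exact ⟨Uset Q (V₁ ∪ V₂), ⟨Q, _, hV₁.union hV₂, rfl⟩, rfl,
    Set.subset_inter (Uset_subset_Uset h₁ Set.subset_union_left)
      (Uset_subset_Uset h₂ Set.subset_union_right)⟩

lemma dense_iff_exists_mem_Uset {S : Set (AF X)} :
    Dense S ↔ ∀ (P : AF X) (V : Set X), V.Finite → ∃ Q ∈ Uset P V, Q ∈ S :=
  isTopologicalBasis_UBasis.dense_iff.trans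
    ⟨fun h P V hV => h _ ⟨P, V, hV, rfl⟩ ⟨P, rfl⟩,
      by rintro h _ ⟨P, V, hV, rfl⟩ -; exact h P V hV⟩

lemma eventually_apply_eq {ι : Type*} {l : Filter ι} {u : ι → AF X} {L : AF X}
    (h : Tendsto u l (𝓝 L)) (p q : X) : ∀ᶠ n in l, (u n).1 p q = L.1 p q := by
  have hU : Uset L {p, q} ∈ 𝓝 L :=
    isTopologicalBasis_UBasis.mem_nhds ⟨L, _, (Set.finite_singleton q).insert p, rfl⟩ rfl
  exact (h.eventually_mem hU).mono fun n hn => mem_Uset_iff_apply.1 hn p (by simp) q (by simp)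

/-- Each mutation at `u` negates row `u`. -/
lemma apply_eq_zero_of_tendsto {i : ℕ → X} {Q L : AF X}
    (h : Tendsto (mutUpTo i Q) atTop (𝓝 L)) {u : X} (hu : ∃ᶠ n in atTop, i n = u) (q : X) :
    L.1 u q = 0 := by
  obtain ⟨N, hN⟩ := eventually_atTop.1 (eventually_apply_eq h u q)
  obtain ⟨_ | n, hn, rfl⟩ := frequently_atTop.1 hu (N + 1)
  · omega
  have := hN (n + 1) (by omega)
  rw [mutUpTo_succ, mut_apply_left, hN n (by omega)] at this
  omega

lemma not_tendsto_of_frequently_apply_ne {i : ℕ → X} {Q L : AF X} {p q : X}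
    (h : ∃ᶠ n in atTop, (mutUpTo i Q (n + 1)).1 p q ≠ (mutUpTo i Q n).1 p q) :
    ¬ Tendsto (mutUpTo i Q) atTop (𝓝 L) := fun hL => by
  obtain ⟨N, hN⟩ := eventually_atTop.1 (eventually_apply_eq hL p q)
  obtain ⟨n, hn, hne⟩ := frequently_atTop.1 h N
  exact hne (by rw [hN n hn, hN (n + 1) (by omega)])

lemma tendsto_of_eventually_mut_eq_self {i : ℕ → X} {Q : AF X}
    (h : ∀ᶠ n in atTop, (mutUpTo i Q n).mut (i (n + 1)) = mutUpTo i Q n) :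
    ∃ L, Tendsto (mutUpTo i Q) atTop (𝓝 L) := by
  obtain ⟨N, hN⟩ := eventually_atTop.1 h
  refine ⟨mutUpTo i Q N, tendsto_atTop_of_eventually_const (i₀ := N) fun n hn => ?_⟩
  induction n, hn using Nat.le_induction with
  | base => rfl
  | succ n hn ih => rw [mutUpTo_succ, hN n hn, ih]

lemma exists_mem_Uset_tendsto {i : ℕ → X} (hi : ∀ v, ∀ᶠ n in atTop, i n ≠ v) (P : AF X)
    {V : Set X} (hV : V.Finite) :
    ∃ Q ∈ Uset P V, ∃ L, Tendsto (mutUpTo i Q) atTop (𝓝 L) := by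
  have hout : ∀ᶠ n in atTop, i (n + 1) ∉ V :=
    (tendsto_add_atTop_nat 1).eventually <|
      (hV.eventually_all.2 fun v _ => hi v).mono fun n hn hnV => hn _ hnV rfl
  refine ⟨P.restrict V, restrict_mem_Uset P V, tendsto_of_eventually_mut_eq_self ?_⟩
  exact hout.mono fun n hn =>
    ((supportedOn_restrict V P).mutUpTo i n).mut_eq_self hn

lemma exists_frequently_eq_of_mem {i : ℕ → X} {R : Set X} (hR : R.Finite)
    (hiR : ∀ n, i (n + 1) ∈ R) : ∃ v ∈ R, ∃ᶠ n in atTop, i n = v :=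
  hR.frequently_exists.1 <| Eventually.frequently <|
    (eventually_ge_atTop 1).mono fun n hn => ⟨i n, Nat.succ_pred_eq_of_pos hn ▸ hiR _, rfl⟩

lemma exists_Uset_forall_not_tendsto [Infinite X] {i : ℕ → X} {R : Set X} (hR : R.Finite)
    (hiR : ∀ n, i (n + 1) ∈ R) : ∃ (P : AF X) (V : Set X), V.Finite ∧
      ∀ Q ∈ Uset P V, ∀ L, ¬ Tendsto (mutUpTo i Q) atTop (𝓝 L) := by
  obtain ⟨v, hvR, hv⟩ := exists_frequently_eq_of_mem hR hiR
  obtain ⟨w, hw⟩ := hR.exists_notMem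
  have hvw : v ≠ w := fun h => hw (h ▸ hvR)
  refine ⟨arrow v w, insert w R, hR.insert w, fun Q hQ L hL => ?_⟩
  have hQn : ∀ n, (mutUpTo i Q n).1 v w = (mutUpTo i (arrow v w) n).1 v w := fun n =>
    mem_Uset_iff_apply.1 (mutUpTo_mem_Uset (fun k => Set.mem_insert_of_mem w (hiR k)) hQ n)
      v (Set.mem_insert_of_mem w hvR) w (Set.mem_insert w R)
  obtain ⟨n, hn⟩ := (eventually_apply_eq hL v w).exists
  exact mutUpTo_arrow_apply_ne_zero i hvw n
    (by rw [← hQn, hn, apply_eq_zero_of_tendsto hL hv])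

lemma eventually_frequently_eq_of_mem {i : ℕ → X} {V : Set X} (hV : V.Finite) :
    ∀ᶠ n in atTop, i n ∈ V → ∃ᶠ m in atTop, i m = i n := by
  have key : ∀ u ∈ V, ∀ᶠ n in atTop, i n = u → ∃ᶠ m in atTop, i m = u := fun u _ => by
    by_cases hu : ∃ᶠ m in atTop, i m = u
    · exact .of_forall fun _ _ => hu
    · exact (not_frequently.1 hu).mono fun n hn h => absurd h hn
  exact (hV.eventually_all.2 key).mono fun n hn h => hn _ h rfl

lemma exists_mut_apply_ne_zero {Q : AF X} {W T : Set X} {w x : X} (hQ : SupportedOn W Q)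
    (hx : x ∈ W → x = w ∨ x ∈ T) (h : ∃ u ∈ T, Q.1 u w ≠ 0) :
    ∃ u ∈ T, (Q.mut x).1 u w ≠ 0 := by
  obtain ⟨u, huT, hu⟩ := h
  by_cases hxw : x = w
  · subst hxw
    exact ⟨u, huT, by rwa [mut_apply_right, neg_ne_zero]⟩
  by_cases hxW : x ∈ W
  · have hxT := (hx hxW).resolve_left hxw
    by_cases h0 : Q.1 x w = 0
    · have hux : u ≠ x := fun h => hu (h ▸ h0)
      exact ⟨u, huT, by rwa [mut_apply_of_ne_of_eq_zero Q hux (Ne.symm hxw) (.inr h0)]⟩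
    · exact ⟨x, hxT, by rwa [mut_apply_left, neg_ne_zero]⟩
  · exact ⟨u, huT, by rwa [hQ.mut_eq_self hxW]⟩

/-- The arrow `s → w` is attached at a time `M` after which every mutated vertex of `V ∪ {s}`
is mutated infinitely often, `w` being a fresh vertex not mutated up to `M`. -/
lemma exists_mem_Uset_not_tendsto_of_frequently [Infinite X] {i : ℕ → X} {s : X}
    (hs : ∃ᶠ n in atTop, i n = s) (P : AF X) {V : Set X} (hV : V.Finite) :
    ∃ Q ∈ Uset P V, ∀ L, ¬ Tendsto (mutUpTo i Q) atTop (𝓝 L) := by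
  set V' := insert s V
  have hV' : V'.Finite := hV.insert s
  set T := {u | u ∈ V' ∧ ∃ᶠ n in atTop, i n = u}
  obtain ⟨M, hM⟩ := eventually_atTop.1 (eventually_frequently_eq_of_mem (i := i) hV')
  obtain ⟨w, hw⟩ := (hV'.union ((Set.finite_Iic M).image i)).exists_notMem
  have hwV' : w ∉ V' := fun h => hw (.inl h)
  have hwi : ∀ k ≤ M, i k ≠ w := fun k hk h => hw (.inr ⟨k, hk, h⟩)
  have hsw : s ≠ w := fun h => hwV' (h ▸ Set.mem_insert s V)
  set A := mutUpTo i (P.restrict V') M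
  have hA : SupportedOn V' A := (supportedOn_restrict V' P).mutUpTo i M
  obtain ⟨Q, hQ, hQW, hQR⟩ := exists_mem_Uset_mutUpTo_eq
    (p := SupportedOn (insert w V')) (fun x _ h => h.mut x)
    (fun _ h k hk hkV q _ => h.apply_eq_zero_right q
      (by rintro (h' | h'); exacts [hwi (k + 1) hk h', hkV h']))
    (hA.add_arrow (Set.mem_insert s V)) (restrict_add_arrow hA hwV')
  refine ⟨Q, Uset_subset_Uset rfl (Set.subset_insert s V) hQ, fun L hL => ?_⟩
  have hcol : ∀ n ≥ M, ∃ u ∈ T, (mutUpTo i Q n).1 u w ≠ 0 := by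
    intro n hn
    induction n, hn using Nat.le_induction with
    | base =>
      refine ⟨s, ⟨Set.mem_insert s V, hs⟩, ?_⟩
      simp [hQR, add_apply, hA.apply_eq_zero_right s hwV', arrow, ofRel_apply, hsw]
    | succ n hn ih =>
      refine exists_mut_apply_ne_zero (hQW.mutUpTo i n) ?_ ih
      rintro (h | h)
      exacts [.inl h, .inr ⟨h, hM (n + 1) (by omega) h⟩]
  obtain ⟨n, hn, hconv⟩ := ((eventually_ge_atTop M).and
    (hV'.eventually_all.2 fun u _ => eventually_apply_eq hL u w)).exists
  obtain ⟨u, ⟨huV, huT⟩, hu⟩ := hcol n hn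
  exact hu (by rw [hconv u huV, apply_eq_zero_of_tendsto hL huT])

/-- `Q` splits along `V`, and each vertex `t` outside `V ∪ {a, b}` lies on a path `a → t → b`
or `b → t → a` of single arrows and on no other arrow. -/
structure IsStar (V : Set X) (a b : X) (Q : AF X) : Prop where
  splits : Splits V Q
  spoke : ∀ t ∉ insert a (insert b V), (Q.1 a t = 1 ∨ Q.1 a t = -1) ∧ Q.1 t b = Q.1 a t
  rim : ∀ t ∉ insert a (insert b V), ∀ t' ∉ insert a (insert b V), Q.1 t t' = 0

lemma IsStar.mut {V : Set X} {a b : X} {Q : AF X} (hQ : IsStar V a b Q) {x : X}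
    (hxa : x ≠ a) (hxb : x ≠ b) : IsStar V a b (Q.mut x) := by
  have hrow : ∀ t ∉ insert a (insert b V), Q.1 x t = 0 := fun t ht => by
    by_cases hxV : x ∈ V
    · exact hQ.splits x hxV t fun h => ht (by simp [h])
    · exact hQ.rim x (by simp [hxa, hxb, hxV]) t ht
  have hcol : ∀ t ∉ insert a (insert b V), Q.1 t x = 0 := fun t ht => by
    rw [Q.apply_swap, hrow t ht, neg_zero]
  refine ⟨hQ.splits.mut x, fun t ht => ?_, fun t ht t' ht' => ?_⟩
  · by_cases htx : t = x
    · subst htx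
      rw [mut_apply_right, mut_apply_left, (hQ.spoke t ht).2]
      exact ⟨(hQ.spoke t ht).1.symm.imp (fun h => by omega) fun h => by omega, rfl⟩
    rw [mut_apply_of_ne_of_eq_zero Q hxa.symm htx (.inr (hrow t ht)),
      mut_apply_of_ne_of_eq_zero Q htx hxb.symm (.inl (hcol t ht))]
    exact hQ.spoke t ht
  · by_cases htx : t = x
    · subst htx; rw [mut_apply_left, hQ.rim t ht t' ht', neg_zero]
    by_cases ht'x : t' = x
    · subst ht'x; rw [mut_apply_right, hQ.rim t ht t' ht', neg_zero]
    rw [mut_apply_of_ne_of_eq_zero Q htx ht'x (.inl (hcol t ht)), hQ.rim t ht t' ht']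

lemma IsStar.mut_apply_ne {V : Set X} {a b : X} {Q : AF X} (hQ : IsStar V a b Q) {t : X}
    (ht : t ∉ insert a (insert b V)) : (Q.mut t).1 a b ≠ Q.1 a b := by
  have hta : a ≠ t := by rintro rfl; simp at ht
  have htb : b ≠ t := by rintro rfl; simp at ht
  obtain ⟨h₁, h₂⟩ := hQ.spoke t ht
  rw [mut_apply_of_ne Q hta htb, h₂]
  rcases h₁ with h | h <;> rw [h] <;> norm_num

noncomputable def star (V : Set X) (a b : X) : AF X :=
  ofRel fun p q =>
    (p = a ∧ q ∉ insert a (insert b V)) ∨ (p ∉ insert a (insert b V) ∧ q = b)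

lemma isStar_add_star {V : Set X} {a b : X} {A : AF X} (hA : SupportedOn V A) (ha : a ∉ V)
    (hb : b ∉ V) (hab : a ≠ b) : IsStar V a b (A + star V a b) where
  splits p hp q hq := by
    have hpa : p ≠ a := fun h => ha (h ▸ hp)
    have hpb : p ≠ b := fun h => hb (h ▸ hp)
    simp [add_apply, hA.apply_eq_zero_right p hq, star, ofRel_apply, hp, hpa, hpb]
  spoke t ht := by
    simp only [Set.mem_insert_iff, not_or] at ht
    obtain ⟨hta, htb, htV⟩ := ht
    simp [add_apply, hA a ha, hA t htV, star, ofRel_apply, hta, htb, htV, hab, hab.symm]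
  rim t ht t' ht' := by
    simp only [Set.mem_insert_iff, not_or] at ht ht'
    simp [add_apply, hA t ht.2.2, star, ofRel_apply, ht.1, ht.2.1, ht'.1, ht'.2.1]

lemma exists_mem_Uset_not_tendsto_of_eventually_ne [Infinite X] {i : ℕ → X}
    (hi : ∀ v, ∀ᶠ n in atTop, i n ≠ v) (P : AF X) {V : Set X} (hV : V.Finite) :
    ∃ Q ∈ Uset P V, ∀ L, ¬ Tendsto (mutUpTo i Q) atTop (𝓝 L) := by
  obtain ⟨a, ha⟩ := hV.exists_notMem
  obtain ⟨b, hb⟩ := (hV.insert a).exists_notMem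
  simp only [Set.mem_insert_iff, not_or] at hb
  have hF : (insert a (insert b V)).Finite := (hV.insert b).insert a
  obtain ⟨N, hN⟩ := eventually_atTop.1 <| (tendsto_add_atTop_nat 1).eventually <|
    (hF.eventually_all.2 fun v _ => hi v).mono fun n hn hnF => hn _ hnF rfl
  have hA := (supportedOn_restrict V P).mutUpTo i N
  have hstar := isStar_add_star hA ha hb.2 (Ne.symm hb.1)
  obtain ⟨Q, hQ, -, hQR⟩ := exists_mem_Uset_mutUpTo_eq (p := Splits V) (fun x _ h => h.mut x)
    (fun _ h _ _ hx q hq => h q hq _ hx) hstar.splits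
    (restrict_add_of_supportedOn hA fun p hp q hq => by
      have hpa : p ≠ a := fun h => ha (h ▸ hp)
      have hpb : p ≠ b := fun h => hb.2 (h ▸ hp)
      simp [star, ofRel_apply, hp, hpa, hpb])
  refine ⟨Q, hQ, fun L => not_tendsto_of_frequently_apply_ne (p := a) (q := b) ?_⟩
  have hQstar : ∀ n ≥ N, IsStar V a b (mutUpTo i Q n) := by
    intro n hn
    induction n, hn using Nat.le_induction with
    | base => rwa [hQR]
    | succ n hn ih =>
      exact ih.mut (fun h => hN n hn (h ▸ Set.mem_insert _ _))
        (fun h => hN n hn (h ▸ Set.mem_insert_of_mem _ (Set.mem_insert _ _)))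
  exact frequently_atTop.2 fun n₀ =>
    ⟨max n₀ N, le_max_left _ _,
      (hQstar _ (le_max_right _ _)).mut_apply_ne (hN _ (le_max_right _ _))⟩

end AF

/-- For any infinite mutation sequence: the domain of divergence is dense in `AF`;
if no vertex occurs infinitely often then the domain of convergence is dense;
if only finitely many vertices occur then the domain of convergence is not dense. -/
theorem af_infinite_mutation_sequences (i : ℕ → ℕ) :
    @Dense _ (weakTop ℕ) (CAF i)ᶜ ∧
    ((∀ v : ℕ, {n : ℕ | 1 ≤ n ∧ i n = v}.Finite) → @Dense _ (weakTop ℕ) (CAF i)) ∧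
    ({v : ℕ | ∃ n : ℕ, 1 ≤ n ∧ i n = v}.Finite → ¬ @Dense _ (weakTop ℕ) (CAF i)) := by
  refine ⟨AF.dense_iff_exists_mem_Uset.2 fun P V hV => ?_, fun hfin => ?_,
    fun hR hdense => ?_⟩
  · obtain ⟨Q, hQ, hdiv⟩ :
        ∃ Q ∈ Uset P V, ∀ L, ¬ Tendsto (mutUpTo i Q) atTop (𝓝 L) := by
      by_cases h : ∃ s, ∃ᶠ n in atTop, i n = s
      · obtain ⟨s, hs⟩ := h
        exact AF.exists_mem_Uset_not_tendsto_of_frequently hs P hV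
      · exact AF.exists_mem_Uset_not_tendsto_of_eventually_ne
          (fun v => not_frequently.1 fun hv => h ⟨v, hv⟩) P hV
    exact ⟨Q, hQ, fun ⟨L, hL⟩ => hdiv L hL⟩
  · have hi : ∀ v, ∀ᶠ n in atTop, i n ≠ v := fun v =>
      ((Nat.cofinite_eq_atTop ▸ (hfin v).eventually_cofinite_notMem).and
        (eventually_ge_atTop 1)).mono fun n hn hv => hn.1 ⟨hn.2, hv⟩
    exact AF.dense_iff_exists_mem_Uset.2 fun P V hV => AF.exists_mem_Uset_tendsto hi P hV
  · obtain ⟨P, V, hV, hPV⟩ :=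
      AF.exists_Uset_forall_not_tendsto hR fun n => ⟨n + 1, n.succ_pos, rfl⟩
    obtain ⟨Q, hQ, L, hL⟩ := AF.dense_iff_exists_mem_Uset.1 hdense P V hV
    exact hPV Q hQ L hL
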